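/- In the soft-priority version of the absolute formulation (obtained by replacing x_{s',c} with z_{s',c} on the left-hand side of the tie-breaking constraint), setting z = 0 and y = 0 reduces the feasible region to exactly the set of initially stable matchings; consequently the soft formulation is always feasible, and moreover every feasible solution of the hard absolute formulation can be mapped to a feasible solution of the soft formulation with the same matching. The analogous statement holds for partial priorities. -/
import Mathlib


open scoped Classical

/-- A many-to-one matching market with levels, families, priority groups and
random tie-breakers, as in "Stable Matching with Contingent Priorities". -/
structure Market where
  Student : Type
  School : Type
  Level : Type
  [instFinS : Fintype Student]
  [instDecS : DecidableEq Student]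
  [instFinC : Fintype School]
  [instDecC : DecidableEq School]
  [instFinL : Fintype Level]
  [instDecL : DecidableEq Level]
  level : Student → Level
  sameFamily : Student → Student → Prop
  fam_refl : ∀ s, sameFamily s s
  fam_symm : ∀ s s', sameFamily s s' → sameFamily s' s
  fam_trans : ∀ s s' s'', sameFamily s s' → sameFamily s' s'' → sameFamily s s''
  cap : School → Level → ℕ
  /-- strict preference of each student over schools plus the outside option `none` -/
  pref : Student → Option School → Option School → Prop
  pref_irrefl : ∀ s o, ¬ pref s o o
  pref_trans : ∀ s o₁ o₂ o₃, pref s o₁ o₂ → pref s o₂ o₃ → pref s o₁ o₃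
  pref_total : ∀ s o o', o ≠ o' → pref s o o' ∨ pref s o' o
  nGroups : ℕ
  nGroups_pos : 1 ≤ nGroups
  group : Student → School → ℕ
  group_pos : ∀ s c, 1 ≤ group s c
  group_le : ∀ s c, group s c ≤ nGroups
  /-- random tie-breakers (smaller is better) -/
  tb : Student → School → ℝ
  tb_distinct : ∀ c s s', s ≠ s' → tb s c ≠ tb s' c

attribute [instance] Market.instFinS Market.instDecS Market.instFinC
  Market.instDecC Market.instFinL Market.instDecL

namespace Market

variable (M : Market)

/-- `s` weakly prefers `o` to `o'`. -/
def wPref (s : M.Student) (o o' : Option M.School) : Prop :=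
  o = o' ∨ M.pref s o o'

/-- A feasible matching: every assigned student finds their school acceptable and the
school offers seats at their level, and per-level capacities are respected. -/
def IsMatching (μ : M.Student → Option M.School) : Prop :=
  (∀ s c, μ s = some c → M.pref s (some c) none ∧ 0 < M.cap c (M.level s)) ∧
  (∀ c ℓ, (Finset.univ.filter fun s => μ s = some c ∧ M.level s = ℓ).card ≤ M.cap c ℓ)

/-- Number of students of level `ℓ` assigned to `c`. -/
noncomputable def assignedCount (μ : M.Student → Option M.School) (c : M.School)
    (ℓ : M.Level) : ℕ :=
  (Finset.univ.filter fun s => μ s = some c ∧ M.level s = ℓ).card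

/-- Non-wastefulness. -/
def NonWasteful (μ : M.Student → Option M.School) : Prop :=
  ¬ ∃ s c, M.pref s (some c) (μ s) ∧
    M.assignedCount μ c (M.level s) < M.cap c (M.level s)

/-- Initial priority order at school `c` (groups first, tie-breakers second). -/
def initPrio (c : M.School) (s s' : M.Student) : Prop :=
  M.group s c < M.group s' c ∨ (M.group s c = M.group s' c ∧ M.tb s c < M.tb s' c)

/-- Initial stability. -/
def InitStable (μ : M.Student → Option M.School) : Prop :=
  M.IsMatching μ ∧ M.NonWasteful μ ∧
  ¬ ∃ s s' c, μ s' = some c ∧ M.level s = M.level s' ∧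
      M.pref s (some c) (μ s) ∧ M.initPrio c s s'

/-- Number of students of `s`'s level with strictly higher initial priority at `c`
who weakly prefer `c` to their match. -/
noncomputable def rivalCount (μ : M.Student → Option M.School) (s : M.Student)
    (c : M.School) : ℕ :=
  (Finset.univ.filter fun s'' => M.level s'' = M.level s ∧ M.initPrio c s'' s ∧
    M.wPref s'' (some c) (μ s'')).card

/-- `s` provides contingent priority at `c` (Definition 2, refined). -/
def Provides (μ : M.Student → Option M.School) (s : M.Student) (c : M.School) : Prop :=
  μ s = some c ∧
  (∃ s', s' ≠ s ∧ M.sameFamily s s' ∧ M.wPref s' (some c) (μ s')) ∧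
  M.rivalCount μ s c < M.cap c (M.level s)

/-- `s` is the effective priority provider of their family at `c`: the provider with
the most favorable tie-breaker. -/
def EffProvider (μ : M.Student → Option M.School) (s : M.Student) (c : M.School) : Prop :=
  M.Provides μ s c ∧
  ∀ s', s' ≠ s → M.sameFamily s s' → M.Provides μ s' c → M.tb s c < M.tb s' c

/-- Contingent group under absolute priorities. -/
noncomputable def absGroup (μ : M.Student → Option M.School) (s : M.Student)
    (c : M.School) : ℕ :=
  if M.group s c < M.nGroups ∨
      (M.EffProvider μ s c ∧ ∃ s', s' ≠ s ∧ M.sameFamily s s' ∧ μ s' = some c) ∨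
      (∃ s', s' ≠ s ∧ M.sameFamily s s' ∧ M.EffProvider μ s' c)
  then M.group s c else M.nGroups + 1

/-- Contingent priority order under absolute priorities. -/
noncomputable def absPrio (μ : M.Student → Option M.School) (c : M.School)
    (s s' : M.Student) : Prop :=
  M.absGroup μ s c < M.absGroup μ s' c ∨
  (M.absGroup μ s c = M.absGroup μ s' c ∧ M.tb s c < M.tb s' c)

/-- Contingent stability under absolute priorities. -/
def AbsStable (μ : M.Student → Option M.School) : Prop :=
  M.IsMatching μ ∧ M.NonWasteful μ ∧
  ¬ ∃ s s' c, μ s' = some c ∧ M.level s = M.level s' ∧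
      M.pref s (some c) (μ s) ∧ M.absPrio μ c s s'

/-- Contingent tie-breaker under partial priorities: a no-priority student inherits
their effective provider's tie-breaker when it is more favorable. -/
noncomputable def partialTb (μ : M.Student → Option M.School) (s : M.Student)
    (c : M.School) : ℝ :=
  if h : M.group s c = M.nGroups ∧ ¬ M.EffProvider μ s c ∧
      ∃ s', s' ≠ s ∧ M.sameFamily s s' ∧ M.EffProvider μ s' c ∧ M.tb s' c < M.tb s c
  then M.tb h.2.2.choose c
  else M.tb s c

/-- Contingent priority order under partial priorities: groups unchanged, contingent
tie-breakers first, with residual ties (within a family) broken by the initial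
tie-breakers (the ε-perturbation of Definition 5). -/
noncomputable def partialPrio (μ : M.Student → Option M.School) (c : M.School)
    (s s' : M.Student) : Prop :=
  M.group s c < M.group s' c ∨
  (M.group s c = M.group s' c ∧
    (M.partialTb μ s c < M.partialTb μ s' c ∨
      (M.partialTb μ s c = M.partialTb μ s' c ∧ M.tb s c < M.tb s' c)))

/-- Contingent stability under partial priorities. -/
def PartialStable (μ : M.Student → Option M.School) : Prop :=
  M.IsMatching μ ∧ M.NonWasteful μ ∧
  ¬ ∃ s s' c, μ s' = some c ∧ M.level s = M.level s' ∧
      M.pref s (some c) (μ s) ∧ M.partialPrio μ c s s'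

/-- Tie-breakers are at the family level: members of a family compare the same way
against any student outside the family. -/
def FamilyTB : Prop :=
  ∀ c (s s' a : M.Student), M.sameFamily s s' → ¬ M.sameFamily s a →
    (M.tb s c < M.tb a c ↔ M.tb s' c < M.tb a c)

/-- Size of the family of `s`. -/
noncomputable def famSize (s : M.Student) : ℕ :=
  (Finset.univ.filter fun s' => M.sameFamily s s').card

/-- Number of families in the market. -/
noncomputable def numFamilies : ℕ :=
  (Finset.univ.image fun s : M.Student =>
    Finset.univ.filter fun s' => M.sameFamily s s').card

/-- Rank of an outcome in a student's preference list (`none` gets rank `|≻ₛ|+1`,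
the penalty for being unassigned). -/
noncomputable def rankVal (s : M.Student) (o : Option M.School) : ℕ :=
  (Finset.univ.filter fun c : M.School => M.pref s (some c) o).card + 1

/-- Total rank objective of a matching. -/
noncomputable def cost (μ : M.Student → Option M.School) : ℕ :=
  ∑ s, M.rankVal s (μ s)

/-- Rank-optimal contingent stable matching under absolute priorities. -/
def RankOptAbs (μ : M.Student → Option M.School) : Prop :=
  M.AbsStable μ ∧ ∀ μ', M.AbsStable μ' → M.cost μ ≤ M.cost μ'

/-- Rank-optimal contingent stable matching under partial priorities. -/
def RankOptPartial (μ : M.Student → Option M.School) : Prop :=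
  M.PartialStable μ ∧ ∀ μ', M.PartialStable μ' → M.cost μ ≤ M.cost μ'

end Market

open Market in
/-- Feasible region of the integer program for contingent stability with absolute
priorities: assignment polytope `P`, provider constraints `R(x)`, receiver
constraints `Q(x,z)`, the absolute stability constraints (7a), and the absolute
tie-breaking constraints (7b). The assignment variables `x` are encoded by the
matching `μ` itself. -/
def AbsFeasible (M : Market) (μ : M.Student → Option M.School)
    (z : M.Student → M.School → Prop)
    (y : M.Student → M.Student → M.School → Prop) : Prop :=
  -- x ∈ P
  M.IsMatching μ ∧
  -- z ∈ R(x)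
  (∀ s c, z s c → μ s = some c) ∧
  (∀ s c, z s c → ∃ s', s' ≠ s ∧ M.sameFamily s s' ∧ μ s' = some c) ∧
  (∀ s c, z s c → M.rivalCount μ s c < M.cap c (M.level s)) ∧
  (∀ s s' c, M.sameFamily s s' → z s c → z s' c → s = s') ∧
  -- y ∈ Q(x,z)
  (∀ s s' c, y s s' c → s' ≠ s ∧ M.sameFamily s s') ∧
  (∀ s s' c, y s s' c → μ s' = some c) ∧
  (∀ s s' c, y s s' c → z s c) ∧
  (∀ s s' c, y s' s c → ¬ z s c) ∧
  -- stability constraints (7a)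
  (∀ s c, M.pref s (some c) none →
    (¬ ∃ c', μ s = some c' ∧ M.wPref s (some c') (some c)) →
    M.cap c (M.level s) ≤
      (Finset.univ.filter fun a => M.level a = M.level s ∧ μ a = some c ∧
        (M.initPrio c a s ∨
          (M.initPrio c s a ∧
            (z a c ∨ ∃ a', a' ≠ a ∧ M.sameFamily a a' ∧ y a' a c)))).card) ∧
  -- tie-breaking constraints (7b)
  (∀ c (s s' a : M.Student), M.sameFamily s s' → s ≠ s' → ¬ M.sameFamily s a →
    M.level a = M.level s →
    μ s' = some c →
    (¬ ∃ c', μ s = some c' ∧ M.wPref s (some c') (some c)) →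
    μ a = some c →
    M.initPrio c a s ∧ (z a c ∨ ∃ a', a' ≠ a ∧ M.sameFamily a a' ∧ y a' a c))

open Market in
/-- Feasible region of the integer program for contingent stability with partial
priorities: as the absolute one, but the stability constraints (8a) only count
lower-priority receivers whose provider beats the envious student, and the
tie-breaking constraints (8b) compare the best initial priorities within the
families involved. -/
def PartFeasible (M : Market) (μ : M.Student → Option M.School)
    (z : M.Student → M.School → Prop)
    (y : M.Student → M.Student → M.School → Prop) : Prop :=
  M.IsMatching μ ∧
  (∀ s c, z s c → μ s = some c) ∧
  (∀ s c, z s c → ∃ s', s' ≠ s ∧ M.sameFamily s s' ∧ μ s' = some c) ∧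
  (∀ s c, z s c → M.rivalCount μ s c < M.cap c (M.level s)) ∧
  (∀ s s' c, M.sameFamily s s' → z s c → z s' c → s = s') ∧
  (∀ s s' c, y s s' c → s' ≠ s ∧ M.sameFamily s s') ∧
  (∀ s s' c, y s s' c → μ s' = some c) ∧
  (∀ s s' c, y s s' c → z s c) ∧
  (∀ s s' c, y s' s c → ¬ z s c) ∧
  -- stability constraints (8a)
  (∀ s c, M.pref s (some c) none →
    (¬ ∃ c', μ s = some c' ∧ M.wPref s (some c') (some c)) →
    M.cap c (M.level s) ≤
      (Finset.univ.filter fun a => M.level a = M.level s ∧ μ a = some c ∧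
        (M.initPrio c a s ∨
          (M.initPrio c s a ∧ ∃ a', a' ≠ a ∧ M.sameFamily a a' ∧ y a' a c ∧
            M.initPrio c a' s))).card) ∧
  -- tie-breaking constraints (8b)
  (∀ c (s s' a : M.Student), M.sameFamily s s' → s ≠ s' → ¬ M.sameFamily s a →
    M.level a = M.level s →
    μ s' = some c →
    (¬ ∃ c', μ s = some c' ∧ M.wPref s (some c') (some c)) →
    μ a = some c →
    (M.initPrio c s a ∨ M.initPrio c s' a) →
    ∃ a', a' ≠ a ∧ M.sameFamily a a' ∧ y a' a c ∧
      ((M.initPrio c a s ∧ M.initPrio c a s') ∨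
        (M.initPrio c a' s ∧ M.initPrio c a' s')))

open Market in
/-- Soft version of the absolute formulation: in the tie-breaking constraint the
hypothesis "sibling s' matched to c" (x_{s',c}) is replaced by "sibling s' is a
recognized effective provider at c" (z_{s',c}). -/
def AbsFeasibleSoft (M : Market) (μ : M.Student → Option M.School)
    (z : M.Student → M.School → Prop)
    (y : M.Student → M.Student → M.School → Prop) : Prop :=
  M.IsMatching μ ∧
  (∀ s c, z s c → μ s = some c) ∧
  (∀ s c, z s c → ∃ s', s' ≠ s ∧ M.sameFamily s s' ∧ μ s' = some c) ∧
  (∀ s c, z s c → M.rivalCount μ s c < M.cap c (M.level s)) ∧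
  (∀ s s' c, M.sameFamily s s' → z s c → z s' c → s = s') ∧
  (∀ s s' c, y s s' c → s' ≠ s ∧ M.sameFamily s s') ∧
  (∀ s s' c, y s s' c → μ s' = some c) ∧
  (∀ s s' c, y s s' c → z s c) ∧
  (∀ s s' c, y s' s c → ¬ z s c) ∧
  (∀ s c, M.pref s (some c) none →
    (¬ ∃ c', μ s = some c' ∧ M.wPref s (some c') (some c)) →
    M.cap c (M.level s) ≤
      (Finset.univ.filter fun a => M.level a = M.level s ∧ μ a = some c ∧
        (M.initPrio c a s ∨
          (M.initPrio c s a ∧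
            (z a c ∨ ∃ a', a' ≠ a ∧ M.sameFamily a a' ∧ y a' a c)))).card) ∧
  -- soft tie-breaking constraints (7d): x_{s',c} replaced by z_{s',c}
  (∀ c (s s' a : M.Student), M.sameFamily s s' → s ≠ s' → ¬ M.sameFamily s a →
    M.level a = M.level s →
    z s' c →
    (¬ ∃ c', μ s = some c' ∧ M.wPref s (some c') (some c)) →
    μ a = some c →
    M.initPrio c a s ∧ (z a c ∨ ∃ a', a' ≠ a ∧ M.sameFamily a a' ∧ y a' a c))

open Market in
/-- Soft version of the partial formulation: x_{s',c} replaced by z_{s',c} in the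
tie-breaking constraint. -/
def PartFeasibleSoft (M : Market) (μ : M.Student → Option M.School)
    (z : M.Student → M.School → Prop)
    (y : M.Student → M.Student → M.School → Prop) : Prop :=
  M.IsMatching μ ∧
  (∀ s c, z s c → μ s = some c) ∧
  (∀ s c, z s c → ∃ s', s' ≠ s ∧ M.sameFamily s s' ∧ μ s' = some c) ∧
  (∀ s c, z s c → M.rivalCount μ s c < M.cap c (M.level s)) ∧
  (∀ s s' c, M.sameFamily s s' → z s c → z s' c → s = s') ∧
  (∀ s s' c, y s s' c → s' ≠ s ∧ M.sameFamily s s') ∧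
  (∀ s s' c, y s s' c → μ s' = some c) ∧
  (∀ s s' c, y s s' c → z s c) ∧
  (∀ s s' c, y s' s c → ¬ z s c) ∧
  (∀ s c, M.pref s (some c) none →
    (¬ ∃ c', μ s = some c' ∧ M.wPref s (some c') (some c)) →
    M.cap c (M.level s) ≤
      (Finset.univ.filter fun a => M.level a = M.level s ∧ μ a = some c ∧
        (M.initPrio c a s ∨
          (M.initPrio c s a ∧ ∃ a', a' ≠ a ∧ M.sameFamily a a' ∧ y a' a c ∧
            M.initPrio c a' s))).card) ∧
  -- soft tie-breaking constraints (8d)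
  (∀ c (s s' a : M.Student), M.sameFamily s s' → s ≠ s' → ¬ M.sameFamily s a →
    M.level a = M.level s →
    z s' c →
    (¬ ∃ c', μ s = some c' ∧ M.wPref s (some c') (some c)) →
    μ a = some c →
    (M.initPrio c s a ∨ M.initPrio c s' a) →
    ∃ a', a' ≠ a ∧ M.sameFamily a a' ∧ y a' a c ∧
      ((M.initPrio c a s ∧ M.initPrio c a s') ∨
        (M.initPrio c a' s ∧ M.initPrio c a' s')))


namespace Market

variable (M : Market)

lemma initPrio_total' (c : M.School) {s s' : M.Student} (h : s ≠ s') :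
    M.initPrio c s s' ∨ M.initPrio c s' s := by
  rcases lt_trichotomy (M.group s c) (M.group s' c) with h1 | h1 | h1
  · exact Or.inl (Or.inl h1)
  · rcases lt_or_gt_of_ne (M.tb_distinct c s s' h) with h2 | h2
    · exact Or.inl (Or.inr ⟨h1, h2⟩)
    · exact Or.inr (Or.inr ⟨h1.symm, h2⟩)
  · exact Or.inr (Or.inl h1)

lemma initPrio_asymm (c : M.School) {s s' : M.Student}
    (h : M.initPrio c s s') : ¬ M.initPrio c s' s := by
  rcases h with h | ⟨h1, h2⟩ <;> rintro (h' | ⟨h1', h2'⟩) <;> first | omega | linarith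

lemma initPrio_trans (c : M.School) {a b d : M.Student}
    (h1 : M.initPrio c a b) (h2 : M.initPrio c b d) : M.initPrio c a d := by
  rcases h1 with h1 | ⟨h1, h1'⟩ <;> rcases h2 with h2 | ⟨h2, h2'⟩
  · exact Or.inl (h1.trans h2)
  · exact Or.inl (h2 ▸ h1)
  · exact Or.inl (h1 ▸ h2)
  · exact Or.inr ⟨h1.trans h2, h1'.trans h2'⟩

lemma pref_strict_of_not_better {μ : M.Student → Option M.School}
    (hM : M.IsMatching μ) {s : M.Student} {c : M.School}
    (hacc : M.pref s (some c) none)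
    (hne : ¬ ∃ c', μ s = some c' ∧ M.wPref s (some c') (some c)) :
    M.pref s (some c) (μ s) := by
  cases hμ : μ s with
  | none => exact hacc
  | some c' =>
      have hcc' : c ≠ c' := by rintro rfl; exact hne ⟨c, hμ, Or.inl rfl⟩
      rcases M.pref_total s (some c) (some c') (by simpa using hcc') with h | h
      · exact h
      · exact absurd ⟨c', hμ, Or.inr h⟩ hne

lemma not_better_of_pref {μ : M.Student → Option M.School}
    (hM : M.IsMatching μ) {s : M.Student} {c : M.School}
    (h : M.pref s (some c) (μ s)) :
    M.pref s (some c) none ∧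
      ¬ ∃ c', μ s = some c' ∧ M.wPref s (some c') (some c) := by
  constructor
  · cases hμ : μ s with
    | none => exact hμ ▸ h
    | some c' =>
        have := (hM.1 s c' hμ).1
        exact M.pref_trans s _ _ _ (hμ ▸ h) this
  · rintro ⟨c', hμ, hw⟩
    rw [hμ] at h
    rcases hw with hw | hw
    · rw [hw] at h; exact M.pref_irrefl s _ h
    · exact M.pref_irrefl s _ (M.pref_trans s _ _ _ h hw)

/-- The counting form of initial stability. -/
def CountStable (μ : M.Student → Option M.School) : Prop :=
  ∀ s c, M.pref s (some c) none →
    (¬ ∃ c', μ s = some c' ∧ M.wPref s (some c') (some c)) →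
    M.cap c (M.level s) ≤
      (Finset.univ.filter fun a => M.level a = M.level s ∧ μ a = some c ∧
        M.initPrio c a s).card

lemma countStable_iff {μ : M.Student → Option M.School} (hM : M.IsMatching μ) :
    M.CountStable μ ↔ (M.NonWasteful μ ∧
      ¬ ∃ s s' c, μ s' = some c ∧ M.level s = M.level s' ∧
        M.pref s (some c) (μ s) ∧ M.initPrio c s s') := by
  constructor
  · intro hcs
    constructor
    · rintro ⟨s, c, hpref, hlt⟩
      obtain ⟨hacc, hnb⟩ := M.not_better_of_pref hM hpref
      have h1 := hcs s c hacc hnb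
      have h2 : (Finset.univ.filter fun a => M.level a = M.level s ∧ μ a = some c ∧
          M.initPrio c a s) ⊆
          (Finset.univ.filter fun a => μ a = some c ∧ M.level a = M.level s) := by
        intro a ha
        simp only [Finset.mem_filter] at ha ⊢
        exact ⟨ha.1, ha.2.2.1, ha.2.1⟩
      have := Finset.card_le_card h2
      unfold assignedCount at hlt
      omega
    · rintro ⟨s, s', c, hμ', hlev, hpref, hprio⟩
      obtain ⟨hacc, hnb⟩ := M.not_better_of_pref hM hpref
      have h1 := hcs s c hacc hnb
      have h2 : (Finset.univ.filter fun a => M.level a = M.level s ∧ μ a = some c ∧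
          M.initPrio c a s) ⊆
          (Finset.univ.filter fun a => μ a = some c ∧ M.level a = M.level s) \ {s'} := by
        intro a ha
        simp only [Finset.mem_filter, Finset.mem_sdiff, Finset.mem_singleton] at ha ⊢
        refine ⟨⟨ha.1, ha.2.2.1, ha.2.1⟩, ?_⟩
        rintro rfl
        exact M.initPrio_asymm c hprio ha.2.2.2
      have h3 := Finset.card_le_card h2
      have h4 : s' ∈ Finset.univ.filter fun a => μ a = some c ∧ M.level a = M.level s := by
        simp [hμ', hlev.symm]
      have h6 : ((Finset.univ.filter fun a => μ a = some c ∧ M.level a = M.level s) \ {s'}).card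
          < (Finset.univ.filter fun a => μ a = some c ∧ M.level a = M.level s).card := by
        apply Finset.card_lt_card
        constructor
        · exact Finset.sdiff_subset
        · intro hsub
          have := hsub h4
          simp at this
      have h7 := hM.2 c (M.level s)
      omega
  · rintro ⟨hnw, henvy⟩ s c hacc hnb
    have hpref : M.pref s (some c) (μ s) := M.pref_strict_of_not_better hM hacc hnb
    have hcap : M.cap c (M.level s) ≤ M.assignedCount μ c (M.level s) := by
      by_contra h
      exact hnw ⟨s, c, hpref, by unfold Market.assignedCount at h ⊢; omega⟩
    have hsub : (Finset.univ.filter fun a => μ a = some c ∧ M.level a = M.level s) ⊆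
        (Finset.univ.filter fun a => M.level a = M.level s ∧ μ a = some c ∧
          M.initPrio c a s) := by
      intro a ha
      simp only [Finset.mem_filter] at ha ⊢
      refine ⟨ha.1, ha.2.2, ha.2.1, ?_⟩
      have hane : a ≠ s := by
        rintro rfl
        rw [ha.2.1] at hpref
        exact M.pref_irrefl _ _ hpref
      rcases M.initPrio_total' c hane with h | h
      · exact h
      · exact absurd ⟨s, a, c, ha.2.1, ha.2.2.symm, hpref, h⟩ henvy
    have := Finset.card_le_card hsub
    unfold assignedCount at hcap
    omega

lemma countStable_iff_initStable (μ : M.Student → Option M.School) :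
    (M.IsMatching μ ∧ M.CountStable μ) ↔ M.InitStable μ := by
  unfold InitStable
  constructor
  · rintro ⟨hM, hcs⟩
    exact ⟨hM, (M.countStable_iff hM).1 hcs⟩
  · rintro ⟨hM, h1, h2⟩
    exact ⟨hM, (M.countStable_iff hM).2 ⟨h1, h2⟩⟩

end Market


section BestElt

variable {α : Type*} [DecidableEq α]

lemma exists_best_elt (r : α → α → Prop)
    (htrans : ∀ a b c, r a b → r b c → r a c)
    (htot : ∀ a b, a ≠ b → r a b ∨ r b a)
    (t : Finset α) (ht : t.Nonempty) :
    ∃ a ∈ t, ∀ b ∈ t, b ≠ a → r a b := by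
  classical
  induction t using Finset.cons_induction with
  | empty => simp at ht
  | cons a s ha ih =>
      rcases s.eq_empty_or_nonempty with rfl | hs
      · exact ⟨a, by simp, by simp⟩
      · obtain ⟨m, hm, hmax⟩ := ih hs
        by_cases ham : a = m
        · subst ham
          exact absurd hm ha
        rcases htot a m ham with h | h
        · refine ⟨a, Finset.mem_cons_self a s, ?_⟩
          intro b hb hba
          rcases Finset.mem_cons.mp hb with rfl | hb
          · exact absurd rfl hba
          · by_cases hbm : b = m
            · subst hbm; exact h
            · exact htrans a m b h (hmax b hb hbm)
        · refine ⟨m, Finset.mem_cons.mpr (Or.inr hm), ?_⟩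
          intro b hb hbm
          rcases Finset.mem_cons.mp hb with rfl | hb
          · exact h
          · exact hmax b hb hbm

/-- For a strict total order on a finset, the map "number of strictly better
elements" is injective and its image is `range P.card`. -/
lemma count_better_image (P : Finset α) (r : α → α → Prop)
    (htrans : ∀ a b c, r a b → r b c → r a c)
    (hirr : ∀ a, ¬ r a a)
    (htot : ∀ a b, a ≠ b → r a b ∨ r b a) :
    (P.image fun a => (P.filter fun b => r b a).card) = Finset.range P.card := by
  classical
  have hasymm : ∀ a b, r a b → ¬ r b a := fun a b h h' => hirr a (htrans a b a h h')
  have hmono : ∀ a ∈ P, ∀ b ∈ P, r a b →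
      (P.filter fun x => r x a).card < (P.filter fun x => r x b).card := by
    intro a haP b hbP hab
    apply Finset.card_lt_card
    constructor
    · intro x hx
      simp only [Finset.mem_filter] at hx ⊢
      exact ⟨hx.1, htrans x a b hx.2 hab⟩
    · intro hsub
      have : a ∈ P.filter fun x => r x a := hsub (by simp [haP, hab])
      simp only [Finset.mem_filter] at this
      exact hirr a this.2
  have hinj : Set.InjOn (fun a => (P.filter fun b => r b a).card) P := by
    intro a ha b hb hab
    by_contra hne
    rcases htot a b hne with h | h
    · exact absurd hab (Nat.ne_of_lt (hmono a ha b hb h))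
    · exact absurd hab.symm (Nat.ne_of_lt (hmono b hb a ha h))
  have hsub : (P.image fun a => (P.filter fun b => r b a).card) ⊆
      Finset.range P.card := by
    intro n hn
    simp only [Finset.mem_image] at hn
    obtain ⟨a, ha, rfl⟩ := hn
    rw [Finset.mem_range]
    apply Finset.card_lt_card
    constructor
    · exact Finset.filter_subset _ _
    · intro hsub'
      have : a ∈ P.filter fun b => r b a := hsub' ha
      simp only [Finset.mem_filter] at this
      exact hirr a this.2
  apply Finset.eq_of_subset_of_card_le hsub
  rw [Finset.card_range, Finset.card_image_of_injOn hinj]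

lemma count_better_top (P : Finset α) (r : α → α → Prop)
    (htrans : ∀ a b c, r a b → r b c → r a c)
    (hirr : ∀ a, ¬ r a a)
    (htot : ∀ a b, a ≠ b → r a b ∨ r b a)
    {k : ℕ} (hk : k ≤ P.card) :
    k ≤ (P.filter fun a => (P.filter fun b => r b a).card < k).card := by
  classical
  have himg := count_better_image P r htrans hirr htot
  have hinj : Set.InjOn (fun a => (P.filter fun b => r b a).card) P := by
    intro a ha b hb hab
    by_contra hne
    have hmono : ∀ a ∈ P, ∀ b ∈ P, r a b →
        (P.filter fun x => r x a).card < (P.filter fun x => r x b).card := by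
      intro a haP b hbP hab'
      apply Finset.card_lt_card
      constructor
      · intro x hx
        simp only [Finset.mem_filter] at hx ⊢
        exact ⟨hx.1, htrans x a b hx.2 hab'⟩
      · intro hsub
        have : a ∈ P.filter fun x => r x a := hsub (by simp [haP, hab'])
        simp only [Finset.mem_filter] at this
        exact hirr a this.2
    rcases htot a b hne with h | h
    · exact absurd hab (Nat.ne_of_lt (hmono a ha b hb h))
    · exact absurd hab.symm (Nat.ne_of_lt (hmono b hb a ha h))
  have key : ((P.filter fun a => (P.filter fun b => r b a).card < k).image
      fun a => (P.filter fun b => r b a).card) =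
      (P.image fun a => (P.filter fun b => r b a).card).filter (· < k) := by
    ext n
    simp only [Finset.mem_image, Finset.mem_filter]
    constructor
    · rintro ⟨a, ⟨haP, hak⟩, rfl⟩
      exact ⟨⟨a, haP, rfl⟩, hak⟩
    · rintro ⟨⟨a, haP, rfl⟩, hn⟩
      exact ⟨a, ⟨haP, hn⟩, rfl⟩
  have hcard : (P.filter fun a => (P.filter fun b => r b a).card < k).card =
      ((P.filter fun a => (P.filter fun b => r b a).card < k).image
        fun a => (P.filter fun b => r b a).card).card := by
    rw [Finset.card_image_of_injOn (hinj.mono (by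
      intro x hx; exact Finset.mem_coe.mpr (Finset.filter_subset _ _ hx)))]
  rw [hcard, key, himg]
  have : (Finset.range P.card).filter (· < k) = Finset.range k := by
    ext i
    simp only [Finset.mem_filter, Finset.mem_range]
    omega
  rw [this, Finset.card_range]

lemma count_better_exists_ge (P : Finset α) (r : α → α → Prop)
    (htrans : ∀ a b c, r a b → r b c → r a c)
    (hirr : ∀ a, ¬ r a a)
    (htot : ∀ a b, a ≠ b → r a b ∨ r b a)
    {k : ℕ} (hk : k < P.card) :
    ∃ a ∈ P, (P.filter fun b => r b a).card = k := by
  classical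
  have himg := count_better_image P r htrans hirr htot
  have : k ∈ Finset.range P.card := Finset.mem_range.mpr hk
  rw [← himg] at this
  simp only [Finset.mem_image] at this
  obtain ⟨a, ha, h⟩ := this
  exact ⟨a, ha, h⟩

end BestElt

namespace Market

variable (M : Market)

/-- Candidate schools for `s` given rejection set `R`. -/
noncomputable def cand (R : Finset (M.Student × M.School)) (s : M.Student) :
    Finset M.School :=
  Finset.univ.filter fun c => M.pref s (some c) none ∧ 0 < M.cap c (M.level s) ∧
    (s, c) ∉ R

/-- Deferred-acceptance proposal of `s` given rejection set `R`. -/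
noncomputable def propose (R : Finset (M.Student × M.School)) (s : M.Student) :
    Option M.School :=
  if h : (M.cand R s).Nonempty then
    some (exists_best_elt (fun c c' => M.pref s (some c) (some c'))
      (fun _ _ _ h1 h2 => M.pref_trans s _ _ _ h1 h2)
      (fun c c' hne => M.pref_total s (some c) (some c') (by simpa using hne))
      _ h).choose
  else none

lemma propose_spec (R : Finset (M.Student × M.School)) (s : M.Student)
    (h : (M.cand R s).Nonempty) :
    ∃ c0, M.propose R s = some c0 ∧ c0 ∈ M.cand R s ∧
      ∀ b ∈ M.cand R s, b ≠ c0 → M.pref s (some c0) (some b) := by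
  unfold propose
  rw [dif_pos h]
  exact ⟨_, rfl,
    (exists_best_elt (fun c c' => M.pref s (some c) (some c'))
      (fun _ _ _ h1 h2 => M.pref_trans s _ _ _ h1 h2)
      (fun c c' hne => M.pref_total s (some c) (some c') (by simpa using hne))
      _ h).choose_spec⟩

lemma propose_mem {R : Finset (M.Student × M.School)} {s : M.Student} {c : M.School}
    (h : M.propose R s = some c) : c ∈ M.cand R s := by
  have hne : (M.cand R s).Nonempty := by
    by_contra h'
    unfold propose at h
    rw [dif_neg h'] at h
    exact absurd h (by simp)
  obtain ⟨c0, hc0, hmem, _⟩ := M.propose_spec R s hne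
  rw [h, Option.some_inj] at hc0
  exact hc0 ▸ hmem

lemma propose_top {R : Finset (M.Student × M.School)} {s : M.Student} {c : M.School}
    (h : c ∈ M.cand R s) :
    ∃ c0, M.propose R s = some c0 ∧ M.wPref s (some c0) (some c) := by
  obtain ⟨c0, hc0, hmem, hbest⟩ := M.propose_spec R s ⟨c, h⟩
  refine ⟨c0, hc0, ?_⟩
  by_cases hc : c = c0
  · exact Or.inl (by rw [hc])
  · exact Or.inr (hbest c h hc)

/-- Same-level higher-initial-priority proposers to `c` than `s`. -/
noncomputable def better (R : Finset (M.Student × M.School)) (c : M.School)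
    (s : M.Student) : Finset M.Student :=
  Finset.univ.filter fun a => M.propose R a = some c ∧ M.level a = M.level s ∧
    M.initPrio c a s

/-- One round of deferred acceptance: add all new rejections. -/
noncomputable def nextR (R : Finset (M.Student × M.School)) :
    Finset (M.Student × M.School) :=
  R ∪ Finset.univ.filter fun p =>
    M.propose R p.1 = some p.2 ∧
      M.cap p.2 (M.level p.1) ≤ (M.better R p.2 p.1).card

/-- The DA invariant: every rejected pair is blocked by a full set of
higher-priority proposers. -/
def Inv (R : Finset (M.Student × M.School)) : Prop :=
  ∀ p ∈ R, M.cap p.2 (M.level p.1) ≤ (M.better R p.2 p.1).card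

lemma cand_nextR_subset (R : Finset (M.Student × M.School)) (s : M.Student) :
    M.cand (M.nextR R) s ⊆ M.cand R s := by
  intro c hc
  simp only [cand, Finset.mem_filter, nextR, Finset.mem_union] at hc ⊢
  exact ⟨hc.1, hc.2.1, hc.2.2.1, fun h => hc.2.2.2 (Or.inl h)⟩

lemma wPref_antisymm {s : M.Student} {c c' : M.School}
    (h1 : M.wPref s (some c) (some c')) (h2 : M.wPref s (some c') (some c)) :
    c = c' := by
  rcases h1 with h1 | h1
  · exact Option.some_inj.mp h1
  rcases h2 with h2 | h2
  · exact (Option.some_inj.mp h2).symm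
  · exact absurd (M.pref_trans s _ _ _ h1 h2) (M.pref_irrefl s _)

lemma propose_nextR {R : Finset (M.Student × M.School)} {s : M.Student} {c : M.School}
    (hp : M.propose R s = some c)
    (hkeep : (M.better R c s).card < M.cap c (M.level s)) :
    M.propose (M.nextR R) s = some c := by
  have hcR : c ∈ M.cand R s := M.propose_mem hp
  have hc : c ∈ M.cand (M.nextR R) s := by
    simp only [cand, Finset.mem_filter, nextR, Finset.mem_union] at hcR ⊢
    refine ⟨hcR.1, hcR.2.1, hcR.2.2.1, ?_⟩
    rintro (h | h)
    · exact hcR.2.2.2 h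
    · exact absurd h.2.2 (by omega)
  obtain ⟨c0, hc0, hw⟩ := M.propose_top hc
  have hc0R : c0 ∈ M.cand R s := M.cand_nextR_subset R s (M.propose_mem hc0)
  obtain ⟨c1, hc1, hw1⟩ := M.propose_top hc0R
  rw [hp] at hc1
  rw [Option.some_inj] at hc1
  subst hc1
  rw [hc0, M.wPref_antisymm hw1 hw]

lemma initPrio_irrefl (c : M.School) (s : M.Student) : ¬ M.initPrio c s s := by
  rintro (h | ⟨_, h⟩)
  · omega
  · linarith

lemma better_eq (R : Finset (M.Student × M.School)) (c : M.School) (ℓ : M.Level)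
    {a : M.Student} (hl : M.level a = ℓ) :
    M.better R c a = (Finset.univ.filter fun b =>
      M.propose R b = some c ∧ M.level b = ℓ).filter fun b => M.initPrio c b a := by
  ext b
  simp only [better, Finset.mem_filter, Finset.mem_univ, true_and, hl]
  tauto

lemma inv_next {R : Finset (M.Student × M.School)} (h : M.Inv R) :
    M.Inv (M.nextR R) := by
  rintro ⟨s, c⟩ hmem
  dsimp only
  set ℓ := M.level s with hℓ
  set P : Finset M.Student := Finset.univ.filter fun b =>
    M.propose R b = some c ∧ M.level b = ℓ with hP
  set r : M.Student → M.Student → Prop := fun a b => M.initPrio c a b with hr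
  have htrans : ∀ a b d, r a b → r b d → r a d := fun a b d => M.initPrio_trans c
  have hirr : ∀ a, ¬ r a a := fun a => M.initPrio_irrefl c a
  have htot : ∀ a b, a ≠ b → r a b ∨ r b a := fun a b hne => M.initPrio_total' c hne
  have hold : M.cap c ℓ ≤ (M.better R c s).card := by
    rcases Finset.mem_union.mp hmem with h1 | h1
    · exact h _ h1
    · exact (Finset.mem_filter.mp h1).2.2
  have hbs : M.better R c s = P.filter fun b => r b s := M.better_eq R c ℓ rfl
  have hPcard : M.cap c ℓ ≤ P.card := by
    have := Finset.card_le_card (Finset.filter_subset (fun b => r b s) P)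
    rw [hbs] at hold
    omega
  have htop := count_better_top P r htrans hirr htot hPcard
  have hTsub : (P.filter fun a => (P.filter fun b => r b a).card < M.cap c ℓ)
      ⊆ M.better (M.nextR R) c s := by
    intro a ha
    rw [Finset.mem_filter] at ha
    obtain ⟨haP, hcnt⟩ := ha
    rw [hP, Finset.mem_filter] at haP
    obtain ⟨-, hprop, hlev⟩ := haP
    have hba : M.better R c a = P.filter fun b => r b a := M.better_eq R c ℓ hlev
    have hpn : M.propose (M.nextR R) a = some c := by
      apply M.propose_nextR hprop
      rw [hba, hlev]
      exact hcnt
    have hane : a ≠ s := by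
      intro heq
      rw [hbs] at hold
      rw [heq] at hcnt
      omega
    have hprio : M.initPrio c a s := by
      rcases htot a s hane with h' | h'
      · exact h'
      · exfalso
        have hsub' : M.better R c s ⊆ M.better R c a := by
          intro b hb
          simp only [better, Finset.mem_filter, Finset.mem_univ, true_and] at hb ⊢
          exact ⟨hb.1, hb.2.1.trans (hlev.trans hℓ).symm,
            M.initPrio_trans c hb.2.2 h'⟩
        have := Finset.card_le_card hsub'
        rw [hbs] at hold
        rw [hba, hbs] at this
        omega
    simp only [better, Finset.mem_filter, Finset.mem_univ, true_and]
    exact ⟨hpn, hlev.trans hℓ, hprio⟩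
  have := Finset.card_le_card hTsub
  omega

noncomputable def Rseq : ℕ → Finset (M.Student × M.School)
  | 0 => ∅
  | n + 1 => M.nextR (Rseq n)

lemma Rseq_inv : ∀ n, M.Inv (M.Rseq n) := by
  intro n
  induction n with
  | zero => intro p hp; simp [Rseq] at hp
  | succ n ih => exact M.inv_next ih

lemma exists_fixedR : ∃ R, M.Inv R ∧ M.nextR R = R := by
  by_contra hcon
  push_neg at hcon
  have key : ∀ n, n ≤ (M.Rseq n).card := by
    intro n
    induction n with
    | zero => simp
    | succ n ih =>
        have hne := hcon (M.Rseq n) (M.Rseq_inv n)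
        have hsub : M.Rseq n ⊂ M.nextR (M.Rseq n) :=
          HasSubset.Subset.ssubset_of_ne Finset.subset_union_left (Ne.symm hne)
        have h1 := Finset.card_lt_card hsub
        have h2 : M.Rseq (n+1) = M.nextR (M.Rseq n) := by simp only [Rseq]
        rw [← h2] at h1
        omega
  have h1 := key (Fintype.card (M.Student × M.School) + 1)
  have h2 := Finset.card_le_univ (M.Rseq (Fintype.card (M.Student × M.School) + 1))
  omega

lemma exists_initStable : ∃ μ, M.InitStable μ := by
  obtain ⟨R, hinv, hfix⟩ := M.exists_fixedR
  refine ⟨M.propose R, ?_⟩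
  rw [← M.countStable_iff_initStable]
  have hmatch : M.IsMatching (M.propose R) := by
    constructor
    · intro s c hc
      have := M.propose_mem hc
      simp only [cand, Finset.mem_filter] at this
      exact ⟨this.2.1, this.2.2.1⟩
    · intro c ℓ
      by_contra hlt
      push_neg at hlt
      set P : Finset M.Student := Finset.univ.filter fun b =>
        M.propose R b = some c ∧ M.level b = ℓ with hP
      obtain ⟨a, haP, hcnt⟩ := count_better_exists_ge P (fun a b => M.initPrio c a b)
        (fun a b d => M.initPrio_trans c) (fun a => M.initPrio_irrefl c a)
        (fun a b hne => M.initPrio_total' c hne) hlt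
      rw [hP, Finset.mem_filter] at haP
      obtain ⟨-, hprop, hlev⟩ := haP
      have hba : M.better R c a = P.filter fun b => M.initPrio c b a :=
        M.better_eq R c ℓ hlev
      have hmem : (a, c) ∈ M.nextR R := by
        apply Finset.mem_union_right
        rw [Finset.mem_filter]
        refine ⟨Finset.mem_univ _, hprop, ?_⟩
        rw [hba, hlev, hcnt]
      rw [hfix] at hmem
      have := M.propose_mem hprop
      simp only [cand, Finset.mem_filter] at this
      exact this.2.2.2 hmem
  refine ⟨hmatch, ?_⟩
  intro s c hacc hnb
  rcases Nat.eq_zero_or_pos (M.cap c (M.level s)) with hz | hpos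
  · omega
  have hR : (s, c) ∈ R := by
    by_contra hR
    have hc : c ∈ M.cand R s := by
      simp only [cand, Finset.mem_filter]
      exact ⟨Finset.mem_univ _, hacc, hpos, hR⟩
    obtain ⟨c0, hc0, hw⟩ := M.propose_top hc
    exact hnb ⟨c0, hc0, hw⟩
  have hcard := hinv (s, c) hR
  dsimp only at hcard
  have hsub : M.better R c s ⊆ Finset.univ.filter fun a =>
      M.level a = M.level s ∧ M.propose R a = some c ∧ M.initPrio c a s := by
    intro b hb
    simp only [better, Finset.mem_filter, Finset.mem_univ, true_and] at hb ⊢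
    exact ⟨hb.2.1, hb.1, hb.2.2⟩
  have := Finset.card_le_card hsub
  omega

end Market

/-- In the soft absolute (resp. partial) formulation, setting z = 0
and y = 0 reduces the feasible region to exactly the initially stable matchings;
consequently the soft formulation is always feasible, and every feasible solution
of the hard formulation maps to a feasible solution of the soft formulation with
the same matching. -/
theorem soft_formulation_properties :
    (∀ (M : Market) (μ : M.Student → Option M.School),
      AbsFeasibleSoft M μ (fun _ _ => False) (fun _ _ _ => False) ↔ M.InitStable μ) ∧
    (∀ M : Market, ∃ (μ : M.Student → Option M.School)
      (z : M.Student → M.School → Prop)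
      (y : M.Student → M.Student → M.School → Prop), AbsFeasibleSoft M μ z y) ∧
    (∀ (M : Market) (μ : M.Student → Option M.School)
      (z : M.Student → M.School → Prop)
      (y : M.Student → M.Student → M.School → Prop),
      AbsFeasible M μ z y →
      ∃ z' y', AbsFeasibleSoft M μ z' y') ∧
    (∀ (M : Market) (μ : M.Student → Option M.School),
      PartFeasibleSoft M μ (fun _ _ => False) (fun _ _ _ => False) ↔ M.InitStable μ) ∧
    (∀ M : Market, ∃ (μ : M.Student → Option M.School)
      (z : M.Student → M.School → Prop)
      (y : M.Student → M.Student → M.School → Prop), PartFeasibleSoft M μ z y) ∧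
    (∀ (M : Market) (μ : M.Student → Option M.School)
      (z : M.Student → M.School → Prop)
      (y : M.Student → M.Student → M.School → Prop),
      PartFeasible M μ z y →
      ∃ z' y', PartFeasibleSoft M μ z' y') := by
  have absIff : ∀ (M : Market) (μ : M.Student → Option M.School),
      AbsFeasibleSoft M μ (fun _ _ => False) (fun _ _ _ => False) ↔ M.InitStable μ := by
    intro M μ
    constructor
    · rintro ⟨hM, -, -, -, -, -, -, -, -, hstab, -⟩
      rw [← M.countStable_iff_initStable]
      refine ⟨hM, ?_⟩
      intro s c hacc hnb
      refine le_trans (hstab s c hacc hnb) (Finset.card_le_card ?_)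
      intro a ha
      simp only [Finset.mem_filter] at ha ⊢
      refine ⟨ha.1, ha.2.1, ha.2.2.1, ?_⟩
      rcases ha.2.2.2 with h | ⟨-, h⟩
      · exact h
      · rcases h with h | ⟨a', _, _, h⟩ <;> exact h.elim
    · intro h
      rw [← M.countStable_iff_initStable] at h
      obtain ⟨hM, hcs⟩ := h
      refine ⟨hM, fun _ _ h => h.elim, fun _ _ h => h.elim, fun _ _ h => h.elim,
        fun _ _ _ _ h => h.elim, fun _ _ _ h => h.elim, fun _ _ _ h => h.elim,
        fun _ _ _ h => h.elim, fun _ _ _ h _ => h.elim, ?_,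
        fun _ _ _ _ _ _ _ _ h => h.elim⟩
      intro s c hacc hnb
      refine le_trans (hcs s c hacc hnb) (Finset.card_le_card ?_)
      intro a ha
      simp only [Finset.mem_filter] at ha ⊢
      exact ⟨ha.1, ha.2.1, ha.2.2.1, Or.inl ha.2.2.2⟩
  have partIff : ∀ (M : Market) (μ : M.Student → Option M.School),
      PartFeasibleSoft M μ (fun _ _ => False) (fun _ _ _ => False) ↔ M.InitStable μ := by
    intro M μ
    constructor
    · rintro ⟨hM, -, -, -, -, -, -, -, -, hstab, -⟩
      rw [← M.countStable_iff_initStable]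
      refine ⟨hM, ?_⟩
      intro s c hacc hnb
      refine le_trans (hstab s c hacc hnb) (Finset.card_le_card ?_)
      intro a ha
      simp only [Finset.mem_filter] at ha ⊢
      refine ⟨ha.1, ha.2.1, ha.2.2.1, ?_⟩
      rcases ha.2.2.2 with h | ⟨-, a', -, -, h, -⟩
      · exact h
      · exact h.elim
    · intro h
      rw [← M.countStable_iff_initStable] at h
      obtain ⟨hM, hcs⟩ := h
      refine ⟨hM, fun _ _ h => h.elim, fun _ _ h => h.elim, fun _ _ h => h.elim,
        fun _ _ _ _ h => h.elim, fun _ _ _ h => h.elim, fun _ _ _ h => h.elim,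
        fun _ _ _ h => h.elim, fun _ _ _ h _ => h.elim, ?_,
        fun _ _ _ _ _ _ _ _ h => h.elim⟩
      intro s c hacc hnb
      refine le_trans (hcs s c hacc hnb) (Finset.card_le_card ?_)
      intro a ha
      simp only [Finset.mem_filter] at ha ⊢
      exact ⟨ha.1, ha.2.1, ha.2.2.1, Or.inl ha.2.2.2⟩
  refine ⟨absIff, ?_, ?_, partIff, ?_, ?_⟩
  · intro M
    obtain ⟨μ, hμ⟩ := M.exists_initStable
    exact ⟨μ, _, _, (absIff M μ).2 hμ⟩
  · rintro M μ z y ⟨h1, h2, h3, h4, h5, h6, h7, h8, h9, h10, h11⟩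
    exact ⟨z, y, h1, h2, h3, h4, h5, h6, h7, h8, h9, h10,
      fun c s s' a ha hb hc hd hz he hf =>
        h11 c s s' a ha hb hc hd (h2 s' c hz) he hf⟩
  · intro M
    obtain ⟨μ, hμ⟩ := M.exists_initStable
    exact ⟨μ, _, _, (partIff M μ).2 hμ⟩
  · rintro M μ z y ⟨h1, h2, h3, h4, h5, h6, h7, h8, h9, h10, h11⟩
    exact ⟨z, y, h1, h2, h3, h4, h5, h6, h7, h8, h9, h10,
      fun c s s' a ha hb hc hd hz he hf hg =>
        h11 c s s' a ha hb hc hd (h2 s' c hz) he hf hg⟩
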